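/- Let R be a commutative ring, S a multiplicative subset, and E an R-module. Then E is u-S-injective if and only if every short exact sequence 0 → E → B → C → 0 beginning at E is u-S-split. -/

import Mathlib

open CategoryTheory

universe u

def IsUSTorsionMod {R : Type u} [CommRing R] (S : Submonoid R) (X : ModuleCat.{u} R) : Prop :=
  ∃ s ∈ S, ∀ x : X, s • x = 0

def IsUSTorsion {R : Type u} [CommRing R] (S : Submonoid R) (T : Type u)
    [AddCommGroup T] [Module R T] : Prop :=
  ∃ s ∈ S, ∀ x : T, s • x = 0

noncomputable def ext (R : Type u) [CommRing R] (n : ℕ) (P M : ModuleCat.{u} R) :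
    ModuleCat.{u} R :=
  ((Ext R (ModuleCat.{u} R) n).obj (Opposite.op P)).obj M

def IsUSProjective {R : Type u} [CommRing R] (S : Submonoid R) (P : Type u)
    [AddCommGroup P] [Module R P] : Prop :=
  ∀ M : ModuleCat.{u} R, IsUSTorsionMod S (ext R 1 (ModuleCat.of R P) M)

def IsUSInjective {R : Type u} [CommRing R] (S : Submonoid R) (E : Type u)
    [AddCommGroup E] [Module R E] : Prop :=
  ∀ M : ModuleCat.{u} R, IsUSTorsionMod S (ext R 1 M (ModuleCat.of R E))

/-! Via a projective resolution `P₁ → P₀ → X → 0`, `s` kills `Ext¹(X, Y)` iff for every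
`μ : P₁ → Y` vanishing on `ker d₁`, `s • μ` factors through `d₁`. Given `0 → E → B → C → 0`,
take `X = C`: composing a lift `P₀ → B` of `P₀ → C` with `d₁` gives such a `μ` with values
in `E`, and a factorisation of `s • μ` produces `r : B → E` with `r ∘ f = s`.
Conversely, split `ι : E → I` up to `s` for an injective module `I`: `ι ∘ μ` extends along `d₁`
because `I` is injective, and `r` brings the extension back to a factorisation of `s • μ`. -/

universe v

open LinearMap

namespace LinearMap

variable {R : Type*} [Ring R] {M N Q : Type*} [AddCommGroup M] [Module R M]
  [AddCommGroup N] [Module R N] [AddCommGroup Q] [Module R Q]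

theorem exists_comp_eq_of_surjective {p : M →ₗ[R] N} (hp : Function.Surjective p)
    {φ : M →ₗ[R] Q} (h : ker p ≤ ker φ) : ∃ ψ : N →ₗ[R] Q, ψ ∘ₗ p = φ :=
  ⟨(ker p).liftQ φ h ∘ₗ (p.quotKerEquivOfSurjective hp).symm.toLinearMap, by ext x; simp⟩

theorem exists_comp_eq_of_injective {i : N →ₗ[R] Q} (hi : Function.Injective i)
    {φ : M →ₗ[R] Q} (h : range φ ≤ range i) : ∃ ψ : M →ₗ[R] N, i ∘ₗ ψ = φ :=
  ⟨(LinearEquiv.ofInjective i hi).symm.toLinearMap ∘ₗ φ.codRestrict _ fun x => h ⟨x, rfl⟩,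
    by ext x; simp⟩

end LinearMap

theorem Module.Injective.exists_comp_eq_of_ker_le {R : Type*} [Ring R] [Small.{v} R]
    {M N : Type*} {Q : Type v} [AddCommGroup M] [Module R M] [AddCommGroup N] [Module R N]
    [AddCommGroup Q] [Module R Q] [Module.Injective R Q] (d : M →ₗ[R] N) {μ : M →ₗ[R] Q} (h : ker d ≤ ker μ) :
    ∃ ν : N →ₗ[R] Q, ν ∘ₗ d = μ := by
  obtain ⟨ν, hν⟩ := Module.Injective.extension_property R Q _ _ ((ker d).liftQ d le_rfl)
    (ker_eq_bot.1 (Submodule.ker_liftQ_eq_bot _ _ _ le_rfl)) ((ker d).liftQ μ h)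
  exact ⟨ν, by ext x; simpa using congr($hν (Submodule.Quotient.mk x))⟩

section SmulSplitting

variable {R : Type*} [CommRing R] {E B C P₁ P₀ : Type*}
  [AddCommGroup E] [Module R E] [AddCommGroup B] [Module R B] [AddCommGroup C] [Module R C]
  [AddCommGroup P₁] [Module R P₁] [AddCommGroup P₀] [Module R P₀]

theorem exists_comp_eq_smul_of_smul_retraction {I : Type v} [Small.{v} R] [AddCommGroup I]
    [Module R I] [Module.Injective R I] {ι : E →ₗ[R] I} {r : I →ₗ[R] E} {s : R}
    (hr : r ∘ₗ ι = s • LinearMap.id) (d : P₁ →ₗ[R] P₀) (μ : P₁ →ₗ[R] E) (hμ : ker d ≤ ker μ) :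
    ∃ ν : P₀ →ₗ[R] E, ν ∘ₗ d = s • μ := by
  obtain ⟨ν, hν⟩ := Module.Injective.exists_comp_eq_of_ker_le d
    (hμ.trans (ker_le_ker_comp μ ι))
  refine ⟨r ∘ₗ ν, ?_⟩
  rw [comp_assoc, hν, ← comp_assoc, hr, smul_comp, id_comp]

/-- With `lift : P₀ → B` lifting `π`, `f ∘ μ = lift ∘ d` and `ν ∘ d = s • μ`, the map
`(p, e) ↦ s • e + ν p` descends along the surjection `(p, e) ↦ lift p + f e : P₀ × E → B`. -/
theorem exists_smul_retraction_of_exact [Module.Projective R P₀]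
    {d : P₁ →ₗ[R] P₀} {π : P₀ →ₗ[R] C} (hdπ : Function.Exact d π) (hπ : Function.Surjective π)
    {f : E →ₗ[R] B} {g : B →ₗ[R] C} (hfg : Function.Exact f g) (hf : Function.Injective f)
    (hg : Function.Surjective g) {s : R}
    (hs : ∀ μ : P₁ →ₗ[R] E, ker d ≤ ker μ → ∃ ν : P₀ →ₗ[R] E, ν ∘ₗ d = s • μ) :
    ∃ r : B →ₗ[R] E, r ∘ₗ f = s • LinearMap.id := by
  obtain ⟨lift, hlift⟩ := Module.projective_lifting_property g π hg
  have hglift (p : P₀) : g (lift p) = π p := congr($hlift p)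
  obtain ⟨μ, hμ⟩ : ∃ μ : P₁ →ₗ[R] E, f ∘ₗ μ = lift ∘ₗ d := by
    refine exists_comp_eq_of_injective hf ?_
    rintro _ ⟨x, rfl⟩
    exact (hfg _).1 <| by simpa [hglift] using hdπ.apply_apply_eq_zero x
  have hfμ (x : P₁) : f (μ x) = lift (d x) := congr($hμ x)
  obtain ⟨ν, hν⟩ := hs μ fun x hx => hf <| by rw [hfμ, mem_ker.1 hx, map_zero, map_zero]
  have hsurj : Function.Surjective (lift.coprod f) := by
    intro b
    obtain ⟨p, hp⟩ := hπ (g b)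
    obtain ⟨e, he⟩ := (hfg (b - lift p)).1 (by simp [hglift, hp])
    exact ⟨(p, e), by simp [he]⟩
  have hker : ker (lift.coprod f) ≤ ker (s • snd R P₀ E + ν ∘ₗ fst R P₀ E) := by
    rintro ⟨p, e⟩ hpe
    have hlp : lift p = -f e := eq_neg_of_add_eq_zero_left hpe
    obtain ⟨q, rfl⟩ := (hdπ p).1 <| by
      rw [← hglift, hlp, map_neg, hfg.apply_apply_eq_zero, neg_zero]
    have hμq : μ q = -e := hf <| by rw [hfμ, hlp, map_neg]
    simp [← LinearMap.comp_apply ν d, hν, hμq]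
  obtain ⟨r, hr⟩ := exists_comp_eq_of_surjective hsurj hker
  refine ⟨r, LinearMap.ext fun e => ?_⟩
  simpa using congr($hr (0, e))

end SmulSplitting

namespace CategoryTheory.ProjectiveResolution

variable {R : Type u} [CommRing R] {X : ModuleCat.{u} R} (P : ProjectiveResolution X)

theorem exact_d_π : Function.Exact (P.complex.d 1 0).hom (P.π.f 0).hom :=
  LinearMap.exact_iff.2 P.exact₀.moduleCat_range_eq_ker.symm

theorem surjective_π : Function.Surjective (P.π.f 0).hom :=
  (ModuleCat.epi_iff_surjective _).1 inferInstance

variable (Y : ModuleCat.{u} R)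

noncomputable def extOneIso :
    ext R 1 X Y ≅ ModuleCat.of R (ker ((P.complex.linearYonedaObj R Y).sc' 0 1 2).g.hom ⧸
      range ((P.complex.linearYonedaObj R Y).sc' 0 1 2).moduleCatToCycles) :=
  P.isoExt 1 Y ≪≫
    ShortComplex.homologyMapIso
      ((P.complex.linearYonedaObj R Y).isoSc' 0 1 2
        ((ComplexShape.up ℕ).prev_eq' (by simp)) ((ComplexShape.up ℕ).next_eq' (by simp))) ≪≫
    ((P.complex.linearYonedaObj R Y).sc' 0 1 2).moduleCatHomologyIso

theorem isTorsionBy_ext_one_iff_cocycle (s : R) :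
    Module.IsTorsionBy R (ext R 1 X Y) s ↔ ∀ μ : P.complex.X 1 ⟶ Y,
      P.complex.d 2 1 ≫ μ = 0 → ∃ ν : P.complex.X 0 ⟶ Y, P.complex.d 1 0 ≫ ν = s • μ := by
  rw [Module.isTorsionBy_iff_mem_annihilator, (P.extOneIso Y).toLinearEquiv.annihilator_eq,
    ← Module.isTorsionBy_iff_mem_annihilator, Module.isTorsionBy_quotient_iff, Subtype.forall]
  refine forall₂_congr fun μ _ => ?_
  simp only [LinearMap.mem_range, Subtype.ext_iff]
  exact Iff.rfl

/-- Since `P` is exact at `P₁`, the `1`-cocycles `P₁ → Y` are the maps vanishing on `ker d₁`. -/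
theorem isTorsionBy_ext_one_iff (s : R) :
    Module.IsTorsionBy R (ext R 1 X Y) s ↔ ∀ μ : P.complex.X 1 →ₗ[R] Y,
      ker (P.complex.d 1 0).hom ≤ ker μ →
        ∃ ν : P.complex.X 0 →ₗ[R] Y, ν ∘ₗ (P.complex.d 1 0).hom = s • μ := by
  have hexact : range (P.complex.d 2 1).hom = ker (P.complex.d 1 0).hom :=
    (P.exact_succ 0).moduleCat_range_eq_ker
  rw [isTorsionBy_ext_one_iff_cocycle]
  refine ModuleCat.homEquiv.forall_congr fun μ => imp_congr ?_ ?_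
  · rw [← hexact, range_le_ker_iff, ModuleCat.hom_ext_iff, ModuleCat.hom_comp,
      ModuleCat.hom_zero]
    rfl
  · refine ModuleCat.homEquiv.exists_congr fun ν => ?_
    rw [ModuleCat.hom_ext_iff, ModuleCat.hom_comp, ModuleCat.hom_smul]
    rfl

end CategoryTheory.ProjectiveResolution

theorem uS_injective_iff_sequences_beginning_split
    {R : Type u} [CommRing R] (S : Submonoid R)
    (E : Type u) [AddCommGroup E] [Module R E] :
    IsUSInjective S E ↔
      ∀ (B C : Type u) [AddCommGroup B] [Module R B] [AddCommGroup C] [Module R C]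
        (f : E →ₗ[R] B) (g : B →ₗ[R] C),
        Function.Injective f → Function.Surjective g →
        LinearMap.range f = LinearMap.ker g →
        ∃ s ∈ S, ∃ f' : B →ₗ[R] E, ∀ e : E, f' (f e) = s • e := by
  constructor
  · intro hE B C _ _ _ _ f g hf hg hfg
    obtain ⟨P⟩ := HasProjectiveResolution.out (Z := ModuleCat.of R C)
    obtain ⟨s, hsS, hs⟩ := hE (ModuleCat.of R C)
    have : Module.Projective R (P.complex.X 0) :=
      (IsProjective.iff_projective _).2 (inferInstanceAs (Projective (P.complex.X 0)))
    obtain ⟨r, hr⟩ := exists_smul_retraction_of_exact P.exact_d_π P.surjective_π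
      (LinearMap.exact_iff.2 hfg.symm) hf hg ((P.isTorsionBy_ext_one_iff _ s).1 hs)
    exact ⟨s, hsS, r, fun e => congr($hr e)⟩
  · intro hsplit M
    let I := Injective.under (ModuleCat.of R E)
    let ι := Injective.ι (ModuleCat.of R E)
    have : Module.Injective R I :=
      Module.injective_module_of_injective_object R I (inj := inferInstanceAs (Injective I))
    obtain ⟨s, hsS, r, hr⟩ := hsplit I (I ⧸ range ι.hom) ι.hom (range ι.hom).mkQ
      ((ModuleCat.mono_iff_injective ι).1 inferInstance) (range ι.hom).mkQ_surjective
      (Submodule.ker_mkQ _).symm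
    obtain ⟨P⟩ := HasProjectiveResolution.out (Z := M)
    exact ⟨s, hsS, (P.isTorsionBy_ext_one_iff _ s).2
      (exists_comp_eq_smul_of_smul_retraction (LinearMap.ext hr) _)⟩
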